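/- Let J : Z_p → R_{≥0} be integrable and radial, supported in Z_p, and let l be a positive integer. For K ∈ G_l, the convolution J(|·|_p) * Ω(p^l|·-K|_p), restricted to Z_p, equals Σ_{I ∈ G_l, I ≠ K} p^{-l} J(|I-K|_p) Ω(p^l|x-I|_p) + Aver_l(J) Ω(p^l|x-K|_p), where Aver_l(J) = ∫_{p^l Z_p} J(|z|_p) dz. -/

import Mathlib

open MeasureTheory

instance {p l : ℕ} [hp : Fact p.Prime] : NeZero (p ^ l) :=
  ⟨pow_ne_zero l hp.out.ne_zero⟩

open Metric Function

/-! The ball `K + p^l ℤ_p` has measure `p^{-l}`, being one of `p^l` disjoint translates tiling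
`ℤ_p`. If `x` lies in it, the ultrametric inequality makes it the ball `x + p^l ℤ_p`, and a
translation turns the convolution into `∫_{p^l ℤ_p} J`. Otherwise, with `I` the residue of `x`,
every `x - y` with `y` in the ball lies in `(I - K) + p^l ℤ_p`, where `J` is constant; the
integral is `p^{-l} J(|I - K|_p)`, and on the right only the `I`-term of the sum survives. -/

section LeftInvariant

variable {E G : Type*} [NormedAddCommGroup E] [MeasurableSpace E] [BorelSpace E]
  [NormedAddCommGroup G] [NormedSpace ℝ G] (μ : Measure E) [μ.IsAddLeftInvariant]

theorem measure_closedBall_eq_measure_closedBall_zero (x : E) (r : ℝ) :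
    μ (closedBall x r) = μ (closedBall 0 r) := by
  rw [← measure_preimage_add μ x, preimage_add_closedBall, sub_self]

theorem setIntegral_closedBall_comp_sub (g : E → G) (x : E) (r : ℝ) :
    ∫ y in closedBall x r, g (y - x) ∂μ = ∫ z in closedBall 0 r, g z ∂μ := by
  have h := (measurePreserving_add_left μ (-x)).setIntegral_preimage_emb
    (measurableEmbedding_addLeft (-x)) g (closedBall 0 r)
  rw [preimage_add_closedBall, sub_neg_eq_add, zero_add] at h
  simpa only [neg_add_eq_sub] using h

theorem setIntegral_closedBall_indicator_sub_of_mem [IsUltrametricDist E] (g : ℝ → G)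
    {x c : E} {r R : ℝ} (hrR : r ≤ R) (hx : x ∈ closedBall c r) :
    ∫ y in closedBall c r, (closedBall 0 R).indicator (fun w => g ‖w‖) (x - y) ∂μ =
      ∫ z in closedBall 0 r, g ‖z‖ ∂μ := by
  rw [IsUltrametricDist.closedBall_eq_of_mem hx,
    ← setIntegral_closedBall_comp_sub μ (fun z => g ‖z‖) x r]
  refine setIntegral_congr_fun measurableSet_closedBall fun y hy => ?_
  have hxy : ‖x - y‖ ≤ r := by rwa [norm_sub_rev, ← dist_eq_norm]
  rw [Set.indicator_of_mem (mem_closedBall_zero_iff.2 (hxy.trans hrR)), norm_sub_rev]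

end LeftInvariant

theorem integral_mul_indicator_one {α : Type*} [MeasurableSpace α] (μ : Measure α) (f : α → ℝ)
    {s : Set α} (hs : MeasurableSet s) :
    ∫ y, f y * s.indicator (fun _ => (1 : ℝ)) y ∂μ = ∫ y in s, f y ∂μ := by
  simp_rw [← Set.indicator_mul_right, mul_one]
  exact integral_indicator hs

theorem Nat.Prime.zpow_neg_natCast_le_one {p : ℕ} (hp : p.Prime) (l : ℕ) :
    (p : ℝ) ^ (-(l : ℤ)) ≤ 1 :=
  zpow_le_one_of_nonpos₀ (Nat.one_le_cast.2 hp.one_le) (neg_nonpos.2 (Nat.cast_nonneg l))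

namespace PadicInt

variable {p : ℕ} [Fact p.Prime]

theorem coe_mem_closedBall_iff_toZModPow_eq {l : ℕ} (z : ℤ_[p]) (I : ZMod (p ^ l)) :
    (z : ℚ_[p]) ∈ closedBall ((I.val : ℤ_[p]) : ℚ_[p]) ((p : ℝ) ^ (-(l : ℤ))) ↔
      toZModPow l z = I := by
  rw [mem_closedBall, dist_eq_norm, ← coe_sub, padic_norm_e_of_padicInt,
    norm_le_pow_iff_mem_span_pow, ← ker_toZModPow, RingHom.mem_ker, map_sub, sub_eq_zero,
    map_natCast, ZMod.natCast_zmod_val]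

theorem mem_closedBall_iff_exists_toZModPow_eq {l : ℕ} (w : ℚ_[p]) (I : ZMod (p ^ l)) :
    w ∈ closedBall ((I.val : ℤ_[p]) : ℚ_[p]) ((p : ℝ) ^ (-(l : ℤ))) ↔
      ∃ z : ℤ_[p], toZModPow l z = I ∧ (z : ℚ_[p]) = w := by
  constructor
  · intro hw
    have hw1 : ‖w‖ ≤ 1 := by
      have hI : ((I.val : ℤ_[p]) : ℚ_[p]) ∈ closedBall (0 : ℚ_[p]) 1 := by
        rw [mem_closedBall_zero_iff, padic_norm_e_of_padicInt]
        exact norm_le_one _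
      rw [← mem_closedBall_zero_iff, IsUltrametricDist.closedBall_eq_of_mem hI]
      exact closedBall_subset_closedBall ((Fact.out : p.Prime).zpow_neg_natCast_le_one l) hw
    exact ⟨⟨w, hw1⟩, (coe_mem_closedBall_iff_toZModPow_eq ⟨w, hw1⟩ I).1 hw, rfl⟩
  · rintro ⟨z, rfl, rfl⟩
    exact (coe_mem_closedBall_iff_toZModPow_eq z _).2 rfl

theorem closedBall_zero_one_eq_iUnion (l : ℕ) :
    closedBall (0 : ℚ_[p]) 1 =
      ⋃ I : ZMod (p ^ l), closedBall ((I.val : ℤ_[p]) : ℚ_[p]) ((p : ℝ) ^ (-(l : ℤ))) := by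
  ext w
  simp only [Set.mem_iUnion, mem_closedBall_iff_exists_toZModPow_eq, mem_closedBall_zero_iff]
  constructor
  · intro hw
    exact ⟨_, ⟨w, hw⟩, rfl, rfl⟩
  · rintro ⟨I, z, -, rfl⟩
    exact padic_norm_e_of_padicInt z ▸ norm_le_one z

theorem pairwise_disjoint_closedBall (l : ℕ) :
    Pairwise (Disjoint on
      fun I : ZMod (p ^ l) => closedBall ((I.val : ℤ_[p]) : ℚ_[p]) ((p : ℝ) ^ (-(l : ℤ)))) := by
  intro I J hIJ
  refine Set.disjoint_left.2 fun w hI hJ => hIJ ?_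
  obtain ⟨z, rfl, rfl⟩ := (mem_closedBall_iff_exists_toZModPow_eq w I).1 hI
  obtain ⟨z', rfl, hz'⟩ := (mem_closedBall_iff_exists_toZModPow_eq _ J).1 hJ
  rw [Subtype.ext hz']

theorem indicator_closedBall_coe_eq_ite {l : ℕ} (x : ℤ_[p]) (I : ZMod (p ^ l)) :
    (closedBall ((I.val : ℤ_[p]) : ℚ_[p]) ((p : ℝ) ^ (-(l : ℤ)))).indicator (fun _ => (1 : ℝ))
      (x : ℚ_[p]) = if toZModPow l x = I then 1 else 0 := by
  by_cases h : toZModPow l x = I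
  · rw [if_pos h, Set.indicator_of_mem ((coe_mem_closedBall_iff_toZModPow_eq x I).2 h)]
  · rw [if_neg h, Set.indicator_of_notMem (mt (coe_mem_closedBall_iff_toZModPow_eq x I).1 h)]

variable [MeasurableSpace ℚ_[p]] [BorelSpace ℚ_[p]] (μ : Measure ℚ_[p]) [μ.IsAddLeftInvariant]

theorem measure_closedBall_zpow_neg (hμ : μ (closedBall 0 1) = 1) (l : ℕ) (c : ℚ_[p]) :
    μ (closedBall c ((p : ℝ) ^ (-(l : ℤ)))) = ((p : ENNReal) ^ l)⁻¹ := by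
  rw [measure_closedBall_eq_measure_closedBall_zero]
  refine ENNReal.eq_inv_of_mul_eq_one_left ?_
  rw [← hμ, closedBall_zero_one_eq_iUnion l,
    measure_iUnion (pairwise_disjoint_closedBall l) fun _ => measurableSet_closedBall, tsum_fintype]
  simp [measure_closedBall_eq_measure_closedBall_zero μ, ZMod.card, mul_comm]

theorem measureReal_closedBall_zpow_neg (hμ : μ (closedBall 0 1) = 1) (l : ℕ) (c : ℚ_[p]) :
    μ.real (closedBall c ((p : ℝ) ^ (-(l : ℤ)))) = (p : ℝ) ^ (-(l : ℤ)) := by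
  rw [measureReal_def, measure_closedBall_zpow_neg μ hμ, ENNReal.toReal_inv, ENNReal.toReal_pow,
    ENNReal.toReal_natCast, zpow_neg, zpow_natCast]

theorem setIntegral_closedBall_indicator_sub_of_toZModPow_ne (hμ : μ (closedBall 0 1) = 1)
    {l : ℕ} (J : ℝ → ℝ)
    (hJ : ∀ I : ZMod (p ^ l), I ≠ 0 →
      ∀ w ∈ closedBall ((I.val : ℤ_[p]) : ℚ_[p]) ((p : ℝ) ^ (-(l : ℤ))),
        J ‖w‖ = J ‖((I.val : ℤ_[p]) : ℚ_[p])‖)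
    {K : ZMod (p ^ l)} {x : ℤ_[p]} (hxK : toZModPow l x ≠ K) :
    ∫ y in closedBall ((K.val : ℤ_[p]) : ℚ_[p]) ((p : ℝ) ^ (-(l : ℤ))),
        (closedBall 0 1).indicator (fun w => J ‖w‖) ((x : ℚ_[p]) - y) ∂μ =
      (p : ℝ) ^ (-(l : ℤ)) * J ‖(((toZModPow l x - K).val : ℤ_[p]) : ℚ_[p])‖ := by
  have hconst : ∀ w ∈ closedBall ((K.val : ℤ_[p]) : ℚ_[p]) ((p : ℝ) ^ (-(l : ℤ))),
      (closedBall 0 1).indicator (fun w => J ‖w‖) ((x : ℚ_[p]) - w) =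
        J ‖(((toZModPow l x - K).val : ℤ_[p]) : ℚ_[p])‖ := by
    intro w hw
    obtain ⟨y, hyK, rfl⟩ := (mem_closedBall_iff_exists_toZModPow_eq w K).1 hw
    have hxy := (coe_mem_closedBall_iff_toZModPow_eq (x - y) (toZModPow l x - K)).2
      (by rw [map_sub, hyK])
    have hxy1 : ((x - y : ℤ_[p]) : ℚ_[p]) ∈ closedBall 0 1 := by
      rw [mem_closedBall_zero_iff, padic_norm_e_of_padicInt]
      exact norm_le_one _
    rw [coe_sub] at hxy hxy1
    rw [Set.indicator_of_mem hxy1, hJ _ (sub_ne_zero.2 hxK) _ hxy]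
  rw [setIntegral_congr_fun measurableSet_closedBall hconst, setIntegral_const,
    measureReal_closedBall_zpow_neg μ hμ, smul_eq_mul]

end PadicInt

open PadicInt in
theorem stmt6_general (p l : ℕ) [Fact p.Prime]
    [MeasurableSpace ℚ_[p]] [BorelSpace ℚ_[p]]
    (μ : Measure ℚ_[p]) [μ.IsAddLeftInvariant]
    (hμ : μ {x : ℚ_[p] | ‖x‖ ≤ 1} = 1)
    (Jr : ℝ → ℝ)
    (hloc : ∀ I : ZMod (p ^ l), I ≠ 0 → ∀ x : ℚ_[p],
      ‖x - ((I.val : ℤ_[p]) : ℚ_[p])‖ ≤ (p : ℝ) ^ (-(l : ℤ)) →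
        Jr ‖x‖ = Jr ‖((I.val : ℤ_[p]) : ℚ_[p])‖)
    (K : ZMod (p ^ l)) (x : ℤ_[p]) :
    ∫ y : ℚ_[p],
        Set.indicator {w : ℚ_[p] | ‖w‖ ≤ 1} (fun w => Jr ‖w‖) ((x : ℚ_[p]) - y) *
        Set.indicator {w : ℚ_[p] | ‖w - ((K.val : ℤ_[p]) : ℚ_[p])‖ ≤ (p : ℝ) ^ (-(l : ℤ))}
          (fun _ => (1 : ℝ)) y ∂μ
      = (∑ I ∈ Finset.univ.filter (fun I : ZMod (p ^ l) => I ≠ K),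
          (p : ℝ) ^ (-(l : ℤ)) * Jr ‖(((I - K).val : ℤ_[p]) : ℚ_[p])‖ *
            Set.indicator {w : ℚ_[p] | ‖w - ((I.val : ℤ_[p]) : ℚ_[p])‖ ≤ (p : ℝ) ^ (-(l : ℤ))}
              (fun _ => (1 : ℝ)) (x : ℚ_[p]))
        + (∫ z in {w : ℚ_[p] | ‖w‖ ≤ (p : ℝ) ^ (-(l : ℤ))}, Jr ‖z‖ ∂μ) *
            Set.indicator {w : ℚ_[p] | ‖w - ((K.val : ℤ_[p]) : ℚ_[p])‖ ≤ (p : ℝ) ^ (-(l : ℤ))}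
              (fun _ => (1 : ℝ)) (x : ℚ_[p]) := by
  have hball (c : ℚ_[p]) (r : ℝ) : {w : ℚ_[p] | ‖w - c‖ ≤ r} = closedBall c r := by
    ext; simp [dist_eq_norm]
  have hball_zero (r : ℝ) : {w : ℚ_[p] | ‖w‖ ≤ r} = closedBall 0 r := by
    ext; simp
  simp only [hball, hball_zero] at hμ ⊢
  rw [integral_mul_indicator_one μ _ measurableSet_closedBall]
  simp only [indicator_closedBall_coe_eq_ite, mul_ite, mul_one, mul_zero, Finset.sum_ite_eq,
    Finset.mem_filter, Finset.mem_univ, true_and]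
  by_cases hxK : toZModPow l x = K
  · rw [setIntegral_closedBall_indicator_sub_of_mem μ Jr
      ((Fact.out : p.Prime).zpow_neg_natCast_le_one l)
      ((coe_mem_closedBall_iff_toZModPow_eq x K).2 hxK),
      if_neg (not_not.2 hxK), if_pos hxK, zero_add]
  · rw [setIntegral_closedBall_indicator_sub_of_toZModPow_ne μ hμ Jr
      (fun I hI w hw => hloc I hI w (mem_closedBall_iff_norm.1 hw)) hxK,
      if_pos hxK, if_neg hxK, add_zero]

/-- For radial integrable `J` supported in `ℤ_p`, locally constant off `0` at scale `p^{-l}`,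
and `K ∈ G_l`, the convolution `J(|·|_p) * Ω(p^l|·-K|_p)` restricted to `ℤ_p` equals
`Σ_{I ≠ K} p^{-l} J(|I-K|_p) Ω(p^l|x-I|_p) + Aver_l(J) Ω(p^l|x-K|_p)`. -/
theorem stmt6 (p l : ℕ) [Fact p.Prime] (hl : 0 < l)
    [MeasurableSpace ℚ_[p]] [BorelSpace ℚ_[p]]
    (μ : Measure ℚ_[p]) [μ.IsAddLeftInvariant]
    (hμ : μ {x : ℚ_[p] | ‖x‖ ≤ 1} = 1)
    (Jr : ℝ → ℝ) (hJnn : ∀ x : ℤ_[p], 0 ≤ Jr ‖x‖)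
    (hJint : Integrable
      (fun z : ℚ_[p] => Set.indicator {w : ℚ_[p] | ‖w‖ ≤ 1} (fun w => Jr ‖w‖) z) μ)
    (hloc : ∀ I : ZMod (p ^ l), I ≠ 0 → ∀ x : ℚ_[p],
      ‖x - ((I.val : ℤ_[p]) : ℚ_[p])‖ ≤ (p : ℝ) ^ (-(l : ℤ)) →
        Jr ‖x‖ = Jr ‖((I.val : ℤ_[p]) : ℚ_[p])‖)
    (K : ZMod (p ^ l)) (x : ℤ_[p]) :
    ∫ y : ℚ_[p],
        Set.indicator {w : ℚ_[p] | ‖w‖ ≤ 1} (fun w => Jr ‖w‖) ((x : ℚ_[p]) - y) *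
        Set.indicator {w : ℚ_[p] | ‖w - ((K.val : ℤ_[p]) : ℚ_[p])‖ ≤ (p : ℝ) ^ (-(l : ℤ))}
          (fun _ => (1 : ℝ)) y ∂μ
      = (∑ I ∈ Finset.univ.filter (fun I : ZMod (p ^ l) => I ≠ K),
          (p : ℝ) ^ (-(l : ℤ)) * Jr ‖(((I - K).val : ℤ_[p]) : ℚ_[p])‖ *
            Set.indicator {w : ℚ_[p] | ‖w - ((I.val : ℤ_[p]) : ℚ_[p])‖ ≤ (p : ℝ) ^ (-(l : ℤ))}
              (fun _ => (1 : ℝ)) (x : ℚ_[p]))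
        + (∫ z in {w : ℚ_[p] | ‖w‖ ≤ (p : ℝ) ^ (-(l : ℤ))}, Jr ‖z‖ ∂μ) *
            Set.indicator {w : ℚ_[p] | ‖w - ((K.val : ℤ_[p]) : ℚ_[p])‖ ≤ (p : ℝ) ^ (-(l : ℤ))}
              (fun _ => (1 : ℝ)) (x : ℚ_[p]) :=
  stmt6_general p l μ hμ Jr hloc K x
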